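/- Let ω = exp(2πi/3), let α ∈ ℂ, and set x = h_0(α), x* = h_0(−α), x** = h_0((2+ω)·α). For every z ∈ ℂ satisfying |z · exp(ω^k · α)| < 1 for each k ∈ {0, 1, 2}, the ordinary generating function of the first aside-stream converges and Σ_{n≥0} h_0((n+ω)·α) · z^n = (x − (3·x² − x*)·z + x**·z²) / (1 − 3·x·z + 3·x*·z² − z³). -/

import Mathlib

/-!
Put `a = exp α`, `b = exp (ωα)`, `c = exp (ω²α)`; then `abc = 1` because `1 + ω + ω² = 0`.
Since `ωˢ(n + ω) = n ωˢ + ωˢ⁺¹` and `ω³ = 1`, the `n`-th term is `(b (za)ⁿ + c (zb)ⁿ + a (zc)ⁿ) / 3`,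
a sum of three geometric series. Moreover `3x`, `3x*` and `3x**` are `a + b + c`, `ab + bc + ca`
(using `abc = 1`) and `a²b + b²c + c²a`, so `1 - 3xz + 3x*z² - z³ = (1 - za)(1 - zb)(1 - zc)`,
and the claimed closed form is `b / (1 - za) + c / (1 - zb) + a / (1 - zc)` over this common
denominator, divided by 3.
-/

open Complex Finset

/-- `ω = exp(2πi/3)`, the primitive cube root of unity. -/
noncomputable def om3 : ℂ := Complex.exp (2 * Real.pi * Complex.I / 3)

/-- The third-order hyperbolic function
`h_k(z) = (1/3) · Σ_{s=0}^{2} ω^{−k·s} · exp(ω^s · z)`. -/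
noncomputable def hfun3 (k : ℕ) (z : ℂ) : ℂ :=
  (1 / (3 : ℂ)) * ∑ s ∈ Finset.range 3, om3 ^ (-((k * s : ℕ) : ℤ)) * Complex.exp (om3 ^ s * z)

lemma isPrimitiveRoot_om3 : IsPrimitiveRoot om3 3 := by
  simpa [om3] using Complex.isPrimitiveRoot_exp 3 (by norm_num)

lemma om3_pow_three : om3 ^ 3 = 1 :=
  isPrimitiveRoot_om3.pow_eq_one

lemma exp_mul_exp_om3_mul_mul_exp_om3_sq_mul (α : ℂ) :
    exp α * exp (om3 * α) * exp (om3 ^ 2 * α) = 1 := by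
  have h := isPrimitiveRoot_om3.geom_sum_eq_zero (by norm_num)
  simp only [sum_range_succ, sum_range_zero, zero_add, pow_zero, pow_one] at h
  rw [← exp_add, ← exp_add, ← exp_zero, ← zero_mul α, ← h]
  congr 1
  ring

lemma hfun3_zero_eq (w : ℂ) : hfun3 0 w = (exp w + exp (om3 * w) + exp (om3 ^ 2 * w)) / 3 := by
  simp only [hfun3, sum_range_succ, sum_range_zero, zero_mul, Nat.cast_zero, neg_zero, zpow_zero,
    one_mul, pow_zero, pow_one, zero_add]
  ring

lemma hfun3_zero_nat_add_om3_mul (n : ℕ) (α z : ℂ) :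
    hfun3 0 ((n + om3) * α) * z ^ n =
      (exp (om3 * α) * (z * exp α) ^ n + exp (om3 ^ 2 * α) * (z * exp (om3 * α)) ^ n
        + exp α * (z * exp (om3 ^ 2 * α)) ^ n) / 3 := by
  have h2 : om3 ^ 2 * ((n + om3) * α) = n * (om3 ^ 2 * α) + α := by
    linear_combination α * om3_pow_three
  rw [hfun3_zero_eq, h2, show om3 * ((n + om3) * α) = n * (om3 * α) + om3 ^ 2 * α by ring,
    show (n + om3) * α = n * α + om3 * α by ring]
  simp only [exp_add, exp_nat_mul, mul_pow]
  ring

lemma hfun3_zero_neg (α : ℂ) :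
    hfun3 0 (-α) = (exp α * exp (om3 * α) + exp (om3 * α) * exp (om3 ^ 2 * α)
      + exp (om3 ^ 2 * α) * exp α) / 3 := by
  have h := exp_mul_exp_om3_mul_mul_exp_om3_sq_mul α
  have ha : (exp α)⁻¹ = exp (om3 * α) * exp (om3 ^ 2 * α) :=
    inv_eq_of_mul_eq_one_right (by linear_combination h)
  have hb : (exp (om3 * α))⁻¹ = exp (om3 ^ 2 * α) * exp α :=
    inv_eq_of_mul_eq_one_right (by linear_combination h)
  have hc : (exp (om3 ^ 2 * α))⁻¹ = exp α * exp (om3 * α) :=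
    inv_eq_of_mul_eq_one_right (by linear_combination h)
  rw [hfun3_zero_eq, mul_neg, mul_neg, exp_neg, exp_neg, exp_neg, ha, hb, hc]
  ring

lemma hfun3_zero_two_add_om3_mul (α : ℂ) :
    hfun3 0 ((2 + om3) * α) = (exp α ^ 2 * exp (om3 * α) + exp (om3 * α) ^ 2 * exp (om3 ^ 2 * α)
      + exp (om3 ^ 2 * α) ^ 2 * exp α) / 3 := by
  have h := hfun3_zero_nat_add_om3_mul 2 α 1
  simp only [Nat.cast_ofNat, mul_one, one_mul, one_pow] at h
  rw [h]
  ring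

lemma cyclic_sum_mul_inv_one_sub_eq {K : Type*} [Field K] [CharZero K] {a b c z x y w : K}
    (habc : a * b * c = 1) (ha : 1 - z * a ≠ 0) (hb : 1 - z * b ≠ 0) (hc : 1 - z * c ≠ 0)
    (hx : x = (a + b + c) / 3) (hy : y = (a * b + b * c + c * a) / 3)
    (hw : w = (a ^ 2 * b + b ^ 2 * c + c ^ 2 * a) / 3) :
    (b * (1 - z * a)⁻¹ + c * (1 - z * b)⁻¹ + a * (1 - z * c)⁻¹) / 3 =
      (x - (3 * x ^ 2 - y) * z + w * z ^ 2) / (1 - 3 * x * z + 3 * y * z ^ 2 - z ^ 3) := by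
  have hden : 1 - 3 * x * z + 3 * y * z ^ 2 - z ^ 3 = (1 - z * a) * (1 - z * b) * (1 - z * c) := by
    subst hx hy
    linear_combination z ^ 3 * habc
  rw [hden, eq_div_iff (mul_ne_zero (mul_ne_zero ha hb) hc)]
  subst hx hy hw
  linear_combination (1 / 3 * b * (1 - z * b) * (1 - z * c)) * mul_inv_cancel₀ ha
    + 1 / 3 * c * (1 - z * a) * (1 - z * c) * mul_inv_cancel₀ hb
    + 1 / 3 * a * (1 - z * a) * (1 - z * b) * mul_inv_cancel₀ hc

/-- Ordinary generating function of the first aside-stream Tchebycheff 3-polynomials: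
`Σ_{n≥0} h_0((n+ω)α)·zⁿ = (x − (3x² − x*)z + x**z²)/(1 − 3xz + 3x*z² − z³)`
with `x = h_0(α)`, `x* = h_0(−α)`, `x** = h_0((2+ω)α)`. -/
theorem ogf_aside_stream_one (α z : ℂ)
    (hz : ∀ k < 3, ‖z * Complex.exp (om3 ^ k * α)‖ < 1) :
    HasSum (fun n : ℕ => hfun3 0 (((n : ℂ) + om3) * α) * z ^ n)
      ((hfun3 0 α - (3 * hfun3 0 α ^ 2 - hfun3 0 (-α)) * z + hfun3 0 ((2 + om3) * α) * z ^ 2) /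
        (1 - 3 * hfun3 0 α * z + 3 * hfun3 0 (-α) * z ^ 2 - z ^ 3)) := by
  have ha : ‖z * exp α‖ < 1 := by simpa using hz 0 (by norm_num)
  have hb : ‖z * exp (om3 * α)‖ < 1 := by simpa using hz 1 (by norm_num)
  have hc : ‖z * exp (om3 ^ 2 * α)‖ < 1 := hz 2 (by norm_num)
  have hgeom := ((((hasSum_geometric_of_norm_lt_one ha).mul_left (exp (om3 * α))).add
    ((hasSum_geometric_of_norm_lt_one hb).mul_left (exp (om3 ^ 2 * α)))).add
    ((hasSum_geometric_of_norm_lt_one hc).mul_left (exp α))).div_const 3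
  rw [funext fun n => hfun3_zero_nat_add_om3_mul n α z, ← cyclic_sum_mul_inv_one_sub_eq
    (exp_mul_exp_om3_mul_mul_exp_om3_sq_mul α) (isUnit_one_sub_of_norm_lt_one ha).ne_zero
    (isUnit_one_sub_of_norm_lt_one hb).ne_zero (isUnit_one_sub_of_norm_lt_one hc).ne_zero
    (hfun3_zero_eq α) (hfun3_zero_neg α) (hfun3_zero_two_add_om3_mul α)]
  exact hgeom
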